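/- Fix r₀ > 0, γ > 1, A > 0 and a real number k. Let J_z : [0,r₀] → ℝ be continuous, define B_θ(r) = (1/r) ∫₀^r s J_z(s) ds for r ∈ (0,r₀] (B_θ(0)=0) and p'(r) = −B_θ(r) J_z(r), assume p is admissible (p ∈ C¹([0,r₀]), p > 0 on [0,r₀), p(r₀) = 0, p' < 0 on some interval [r₀−ε, r₀), lim_{r→r₀⁻} p(r)/p'(r) = 0), and set ρ = (p/A)^{1/γ}. Then there exists a constant C > 0 such that for all C¹ functions ξ, η on [0,r₀] with ξ(0) = 0: | E_{0,k}(ξ,η) | ≤ C ‖(ξ,η)‖²_{X_k}, where E_{0,k}(ξ,η) = 2π² ∫₀^{r₀} { 2p'(r)ξ(r)²/r + B_θ(r)² [ kη(r) − (1/r)((rξ)'(r) − 2ξ(r)) ]² + γ p(r) [ (1/r)(rξ)'(r) − kη(r) ]² } r dr and ‖(ξ,η)‖²_{X_k} = ∫₀^{r₀} { p(r) | (1/r)(rξ)'(r) |² + B_θ(r)² [ kη(r) − (1/r)((rξ)'(r) − 2ξ(r)) ]² } r dr + ∫₀^{r₀} ρ(r)(ξ(r)² + η(r)²) r dr. -/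

import Mathlib

/-!
Write the energy density as `2 p' ξ² + s`, where `s` collects the magnetic and compression terms.
The term `s` is nonnegative and bounded pointwise by the `X_k` density. For the `η`-part this uses
`p = A ρ^γ ≤ K ρ`, which holds because `γ ≥ 1` and `p` is bounded.

The destabilizing term `∫ p' ξ²` is split at `a = r₀ / 2`. On `[0, a]` the Taylor bound
`|p'| = |B_θ J_z| ≤ M r` applies, and `ρ` is bounded below there. On `[a, r₀]` integrate by parts
using `p(r₀) = 0`:
`∫_a^{r₀} p' ξ² = -p(a) ξ(a)² - ∫_a^{r₀} 2 p ξ ξ'`.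
Here `ξ' = (rξ)'/r - ξ/r` and `r ≥ a`, so the last integrand is controlled. For the boundary term,
`a ξ(a)² = ∫_0^a (r ξ²)'`, which is again controlled because `p` and `ρ` are bounded below on
`[0, a]`.
-/

open Set MeasureTheory Function intervalIntegral

theorem ContinuousOn.update_slope {f : ℝ → ℝ} {s : Set ℝ} {a f' : ℝ} (hf : ContinuousOn f s)
    (hfa : HasDerivWithinAt f f' s a) : ContinuousOn (update (slope f a) a f') s := by
  intro x hx
  rcases eq_or_ne x a with rfl | hxa
  · exact continuousWithinAt_update_same.2 (hasDerivWithinAt_iff_tendsto_slope.1 hfa)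
  · rw [continuousWithinAt_update_of_ne hxa,
      show slope f a = fun y => (f y - f a) / (y - a) from funext (slope_def_field f a)]
    exact ((hf x hx).sub continuousWithinAt_const).div
      (continuousWithinAt_id.sub continuousWithinAt_const) (sub_ne_zero.2 hxa)

theorem continuousOn_Icc_of_Ioc {f : ℝ → ℝ} {a b : ℝ} (hf : ContinuousOn f (Ioc a b))
    (ha : ContinuousWithinAt f (Icc a b) a) : ContinuousOn f (Icc a b) := by
  intro x hx
  rcases eq_or_ne x a with rfl | hxa
  · exact ha
  · rw [← continuousWithinAt_sdiff_singleton (y := a), Icc_sdiff_left]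
    exact hf x ⟨hx.1.lt_of_ne' hxa, hx.2⟩

theorem integral_le_mul_integral_of_le_mul {f g : ℝ → ℝ} {a b c d L : ℝ} (hac : a ≤ c)
    (hcd : c ≤ d) (hdb : d ≤ b) (hf : IntervalIntegrable f volume c d)
    (hg : IntervalIntegrable g volume a b) (hg0 : ∀ x ∈ Icc a b, 0 ≤ g x) (hL : 0 ≤ L)
    (hfg : ∀ x ∈ Icc c d, f x ≤ L * g x) :
    ∫ x in c..d, f x ≤ L * ∫ x in a..b, g x := by
  have hsub : uIcc c d ⊆ uIcc a b := by
    rw [uIcc_of_le hcd, uIcc_of_le (hac.trans (hcd.trans hdb))]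
    exact Icc_subset_Icc hac hdb
  calc ∫ x in c..d, f x ≤ ∫ x in c..d, L * g x :=
        integral_mono_on hcd hf ((hg.mono_set hsub).const_mul L) hfg
    _ = L * ∫ x in c..d, g x := integral_const_mul L g
    _ ≤ L * ∫ x in a..b, g x := by
        gcongr
        exact integral_mono_interval hac hcd hdb (ae_restrict_of_forall_mem measurableSet_Ioc
          fun x hx => hg0 x (Ioc_subset_Icc_self hx)) hg

theorem abs_integral_le_mul_integral_of_abs_le_mul {f g : ℝ → ℝ} {a b c d L : ℝ} (hac : a ≤ c)
    (hcd : c ≤ d) (hdb : d ≤ b) (hf : IntervalIntegrable f volume c d)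
    (hg : IntervalIntegrable g volume a b) (hg0 : ∀ x ∈ Icc a b, 0 ≤ g x) (hL : 0 ≤ L)
    (hfg : ∀ x ∈ Icc c d, |f x| ≤ L * g x) :
    |∫ x in c..d, f x| ≤ L * ∫ x in a..b, g x :=
  (abs_integral_le_integral_abs hcd).trans
    (integral_le_mul_integral_of_le_mul hac hcd hdb hf.abs hg hg0 hL hfg)

theorem integral_deriv_mul_sq_eq {u u' ξ ξ' : ℝ → ℝ} {a b : ℝ} (hab : a ≤ b)
    (hu : ∀ x ∈ Icc a b, HasDerivWithinAt u (u' x) (Icc a b) x) (hu' : ContinuousOn u' (Icc a b))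
    (hξ : ∀ x ∈ Icc a b, HasDerivWithinAt ξ (ξ' x) (Icc a b) x)
    (hξ' : ContinuousOn ξ' (Icc a b)) :
    ∫ x in a..b, (u' x * ξ x ^ 2 + u x * (2 * ξ x * ξ' x)) = u b * ξ b ^ 2 - u a * ξ a ^ 2 := by
  have hξc : ContinuousOn ξ (Icc a b) := fun x hx => (hξ x hx).continuousWithinAt
  rw [← uIcc_of_le hab] at hu hu' hξ hξ' hξc
  refine integral_deriv_mul_eq_sub_of_hasDerivWithinAt hu (fun x hx => ?_)
    hu'.intervalIntegrable (by apply ContinuousOn.intervalIntegrable; fun_prop)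
  convert (hξ x hx).fun_pow 2 using 1
  norm_num

theorem self_le_rpow_mul_rpow {y Y γ : ℝ} (hy : 0 ≤ y) (hyY : y ≤ Y) (hγ : 1 ≤ γ) :
    y ≤ Y ^ (1 - 1 / γ) * y ^ (1 / γ) := by
  have hexp : 0 ≤ 1 - 1 / γ := sub_nonneg.2 (div_le_one_of_le₀ hγ (by linarith))
  calc y = y ^ (1 - 1 / γ) * y ^ (1 / γ) := by
        rw [← Real.rpow_add' hy (by norm_num), sub_add_cancel, Real.rpow_one]
    _ ≤ Y ^ (1 - 1 / γ) * y ^ (1 / γ) := by gcongr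

theorem exists_le_mul_rpow {p : ℝ → ℝ} {s : Set ℝ} {A γ : ℝ} (hs : IsCompact s)
    (hp : ContinuousOn p s) (hp0 : ∀ r ∈ s, 0 ≤ p r) (hA : 0 < A) (hγ : 1 ≤ γ) :
    ∃ K ≥ 0, ∀ r ∈ s, p r ≤ K * (p r / A) ^ (1 / γ) := by
  obtain ⟨P, hP⟩ := hs.exists_bound_of_continuousOn hp
  refine ⟨A * (max P 0 / A) ^ (1 - 1 / γ), by positivity, fun r hr => ?_⟩
  have hpP : p r / A ≤ max P 0 / A := by
    gcongr
    exact (le_abs_self _).trans ((hP r hr).trans (le_max_left _ _))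
  calc p r = A * (p r / A) := by field_simp
    _ ≤ A * ((max P 0 / A) ^ (1 - 1 / γ) * (p r / A) ^ (1 / γ)) := by
        gcongr
        exact self_le_rpow_mul_rpow (div_nonneg (hp0 r hr) hA.le) hpP hγ
    _ = A * (max P 0 / A) ^ (1 - 1 / γ) * (p r / A) ^ (1 / γ) := by ring

theorem nonneg_of_pos_on_Ico_of_eq_zero {f : ℝ → ℝ} {a b : ℝ} (hpos : ∀ x ∈ Ico a b, 0 < f x)
    (hb : f b = 0) : ∀ x ∈ Icc a b, 0 ≤ f x := by
  rintro x ⟨hax, hxb⟩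
  rcases hxb.lt_or_eq with hxb | rfl
  exacts [(hpos x ⟨hax, hxb⟩).le, hb.ge]

theorem abs_one_div_mul_integral_mul_le {J : ℝ → ℝ} {r M : ℝ} (hr : 0 < r)
    (hJ : ∀ s ∈ Icc 0 r, |J s| ≤ M) : |1 / r * ∫ s in (0:ℝ)..r, s * J s| ≤ M / 2 * r := by
  have hint : ‖∫ s in (0:ℝ)..r, s * J s‖ ≤ ∫ s in (0:ℝ)..r, M * s := by
    refine norm_integral_le_of_norm_le (μ := volume) (g := fun s => M * s) hr.le
      (.of_forall fun s hs => ?_) (by apply Continuous.intervalIntegrable; fun_prop)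
    rw [Real.norm_eq_abs, abs_mul, abs_of_pos hs.1, mul_comm]
    exact mul_le_mul_of_nonneg_right (hJ s (Ioc_subset_Icc_self hs)) hs.1.le
  rw [Real.norm_eq_abs, intervalIntegral.integral_const_mul, integral_id] at hint
  rw [abs_mul, abs_of_pos (one_div_pos.2 hr)]
  calc 1 / r * |∫ s in (0:ℝ)..r, s * J s| ≤ 1 / r * (M * ((r ^ 2 - 0 ^ 2) / 2)) := by gcongr
    _ = M / 2 * r := by field_simp; ring

section FirstMoment

variable {B J : ℝ → ℝ} {r₀ : ℝ}

theorem abs_le_of_eq_one_div_mul_integral {M : ℝ} (hB0 : B 0 = 0)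
    (hB : ∀ r ∈ Ioc 0 r₀, B r = 1 / r * ∫ s in (0:ℝ)..r, s * J s)
    (hJ : ∀ s ∈ Icc 0 r₀, |J s| ≤ M) : ∀ r ∈ Icc 0 r₀, |B r| ≤ M / 2 * r := by
  rintro r ⟨hr0, hr⟩
  rcases hr0.eq_or_lt with rfl | hr0
  · simp [hB0]
  · rw [hB r ⟨hr0, hr⟩]
    exact abs_one_div_mul_integral_mul_le hr0 fun s hs => hJ s ⟨hs.1, hs.2.trans hr⟩

theorem continuousOn_of_eq_one_div_mul_integral (hJ : ContinuousOn J (Icc 0 r₀)) (hB0 : B 0 = 0)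
    (hB : ∀ r ∈ Ioc 0 r₀, B r = 1 / r * ∫ s in (0:ℝ)..r, s * J s) :
    ContinuousOn B (Icc 0 r₀) := by
  obtain ⟨M, hM⟩ := isCompact_Icc.exists_bound_of_continuousOn hJ
  have hBle := abs_le_of_eq_one_div_mul_integral hB0 hB fun s hs => by simpa using hM s hs
  refine continuousOn_Icc_of_Ioc (ContinuousOn.congr ?_ hB) ?_
  · rcases le_or_gt 0 r₀ with hr₀ | hr₀
    · have hF := continuousOn_primitive_interval (μ := volume) (a := 0) (b := r₀)
        (f := fun s => s * J s)
        (by rw [uIcc_of_le hr₀]; exact (continuousOn_id.mul hJ).integrableOn_Icc)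
      rw [uIcc_of_le hr₀] at hF
      exact (continuousOn_const.div continuousOn_id fun r hr => hr.1.ne').mul
        (hF.mono Ioc_subset_Icc_self)
    · simp [Ioc_eq_empty_of_le hr₀.le]
  · rw [ContinuousWithinAt, hB0]
    refine squeeze_zero_norm' (eventually_nhdsWithin_of_forall hBle) ?_
    simpa using ((continuous_const_mul (M / 2)).tendsto 0).mono_left nhdsWithin_le_nhds

end FirstMoment

/-- `ξ r / r` extends continuously to `r = 0` by `ξ' 0`, which removes the apparent singularity. -/
theorem intervalIntegrable_of_eq_div {ξ ξ' f : ℝ → ℝ} {F : ℝ → ℝ → ℝ} {r₀ : ℝ} (hr₀ : 0 ≤ r₀)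
    (hξ : ∀ r ∈ Icc 0 r₀, HasDerivWithinAt ξ (ξ' r) (Icc 0 r₀) r) (hξ0 : ξ 0 = 0)
    (hf : ∀ r ≠ 0, f r = F r (ξ r / r))
    (hF : ∀ q : ℝ → ℝ, ContinuousOn q (Icc 0 r₀) → ContinuousOn (fun r => F r (q r)) (Icc 0 r₀)) :
    IntervalIntegrable f volume 0 r₀ := by
  have hq := ContinuousOn.update_slope (fun r hr => (hξ r hr).continuousWithinAt)
    (hξ 0 ⟨le_rfl, hr₀⟩)
  refine (intervalIntegrable_congr fun r hr => ?_).2 ((hF _ hq).intervalIntegrable_of_Icc hr₀)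
  rw [uIoc_of_le hr₀] at hr
  rw [hf r hr.1.ne', update_of_ne hr.1.ne', slope_def_field, hξ0, sub_zero, sub_zero]

section Densities

variable {k γ K M a c r r₀ : ℝ} {p p' Bθ ρ ξ ξ' η : ℝ → ℝ}

/-- The integrand of `E_{0,k}(ξ,η) / (2π²)`, with `(rξ)'` expanded to `ξ + r ξ'`. -/
noncomputable def energyDensity (γ k : ℝ) (p p' Bθ ξ ξ' η : ℝ → ℝ) (r : ℝ) : ℝ :=
  (2 * p' r * ξ r ^ 2 / r + Bθ r ^ 2 * (k * η r - (r * ξ' r - ξ r) / r) ^ 2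
    + γ * p r * ((ξ r + r * ξ' r) / r - k * η r) ^ 2) * r

noncomputable def stabilizingDensity (γ k : ℝ) (p Bθ ξ ξ' η : ℝ → ℝ) (r : ℝ) : ℝ :=
  (Bθ r ^ 2 * (k * η r - (r * ξ' r - ξ r) / r) ^ 2
    + γ * p r * ((ξ r + r * ξ' r) / r - k * η r) ^ 2) * r

/-- `‖(ξ,η)‖²_{X_k}` is `∫ gradDensity + ∫ massDensity` over `[0, r₀]`. -/
noncomputable def gradDensity (k : ℝ) (p Bθ ξ ξ' η : ℝ → ℝ) (r : ℝ) : ℝ :=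
  (p r * ((ξ r + r * ξ' r) / r) ^ 2 + Bθ r ^ 2 * (k * η r - (r * ξ' r - ξ r) / r) ^ 2) * r

def massDensity (ρ ξ η : ℝ → ℝ) (r : ℝ) : ℝ := ρ r * (ξ r ^ 2 + η r ^ 2) * r

noncomputable def xkDensity (k : ℝ) (p Bθ ρ ξ ξ' η : ℝ → ℝ) (r : ℝ) : ℝ :=
  gradDensity k p Bθ ξ ξ' η r + massDensity ρ ξ η r

theorem energyDensity_eq (hξ0 : ξ 0 = 0) (r : ℝ) :
    energyDensity γ k p p' Bθ ξ ξ' η r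
      = 2 * (p' r * ξ r ^ 2) + stabilizingDensity γ k p Bθ ξ ξ' η r := by
  unfold energyDensity stabilizingDensity
  rcases eq_or_ne r 0 with rfl | hr
  · simp [hξ0]
  · field_simp
    ring

theorem stabilizingDensity_nonneg (hr : 0 ≤ r) (hp : 0 ≤ p r) (hγ : 0 ≤ γ) :
    0 ≤ stabilizingDensity γ k p Bθ ξ ξ' η r := by
  unfold stabilizingDensity; positivity

theorem xkDensity_nonneg (hr : 0 ≤ r) (hp : 0 ≤ p r) (hρ : 0 ≤ ρ r) :
    0 ≤ xkDensity k p Bθ ρ ξ ξ' η r := by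
  unfold xkDensity gradDensity massDensity; positivity

theorem mul_sq_add_mul_sq_le_xkDensity (hr : 0 ≤ r) (hρ : 0 ≤ ρ r) :
    p r * ((ξ r + r * ξ' r) / r) ^ 2 * r + ρ r * ξ r ^ 2 * r
      ≤ xkDensity k p Bθ ρ ξ ξ' η r := by
  unfold xkDensity gradDensity massDensity
  have : 0 ≤ Bθ r ^ 2 * (k * η r - (r * ξ' r - ξ r) / r) ^ 2 * r + ρ r * η r ^ 2 * r := by
    positivity
  linarith

theorem stabilizingDensity_le (hr : 0 ≤ r) (hp : 0 ≤ p r) (hρ : 0 ≤ ρ r)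
    (hpK : p r ≤ K * ρ r) (hK : 0 ≤ K) (hγ : 0 ≤ γ) :
    stabilizingDensity γ k p Bθ ξ ξ' η r
      ≤ (1 + 2 * γ * (1 + k ^ 2 * K)) * xkDensity k p Bθ ρ ξ ξ' η r := by
  unfold stabilizingDensity xkDensity gradDensity massDensity
  set V := (ξ r + r * ξ' r) / r
  set W := k * η r - (r * ξ' r - ξ r) / r
  have hU : (V - k * η r) ^ 2 ≤ 2 * V ^ 2 + 2 * k ^ 2 * η r ^ 2 := by
    nlinarith [sq_nonneg (V + k * η r)]
  have hpη : p r * η r ^ 2 * r ≤ K * ρ r * η r ^ 2 * r := by gcongr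
  have h1 : 0 ≤ Bθ r ^ 2 * W ^ 2 * r := by positivity
  have h2 : 0 ≤ p r * V ^ 2 * r := by positivity
  have h3 : 0 ≤ ρ r * ξ r ^ 2 * r := by positivity
  have h4 : 0 ≤ ρ r * η r ^ 2 * r := by positivity
  nlinarith [mul_le_mul_of_nonneg_left hU (by positivity : 0 ≤ γ * p r * r),
    mul_le_mul_of_nonneg_left hpη (by positivity : 0 ≤ 2 * γ * k ^ 2),
    mul_nonneg (by positivity : 0 ≤ 2 * γ * (1 + k ^ 2 * K)) h1,
    mul_nonneg (by positivity : 0 ≤ 2 * γ * k ^ 2 * K) h2,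
    mul_nonneg (by positivity : 0 ≤ 1 + 2 * γ * (1 + k ^ 2 * K)) h3,
    mul_nonneg (by positivity : 0 ≤ 1 + 2 * γ) h4]

theorem abs_deriv_mul_sq_le_xkDensity (hr : 0 ≤ r) (hp : 0 ≤ p r) (hc : 0 < c) (hcρ : c ≤ ρ r)
    (hM : 0 ≤ M) (hp' : |p' r| ≤ M * r) :
    |p' r * ξ r ^ 2| ≤ M / c * xkDensity k p Bθ ρ ξ ξ' η r := by
  have hn : c * (r * ξ r ^ 2) ≤ xkDensity k p Bθ ρ ξ ξ' η r := by
    have := mul_sq_add_mul_sq_le_xkDensity (k := k) (p := p) (Bθ := Bθ) (ξ := ξ) (ξ' := ξ')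
      (η := η) hr (hc.le.trans hcρ)
    have : c * (r * ξ r ^ 2) ≤ ρ r * ξ r ^ 2 * r := by
      rw [mul_comm r, ← mul_assoc]; gcongr
    have : 0 ≤ p r * ((ξ r + r * ξ' r) / r) ^ 2 * r := by positivity
    linarith
  calc |p' r * ξ r ^ 2| ≤ M * r * ξ r ^ 2 := by
        rw [abs_mul, abs_of_nonneg (sq_nonneg (ξ r))]; gcongr
    _ = M / c * (c * (r * ξ r ^ 2)) := by field_simp
    _ ≤ M / c * xkDensity k p Bθ ρ ξ ξ' η r := by gcongr

theorem sq_add_mul_deriv_sq_le_xkDensity (hr : 0 ≤ r) (hc : 0 < c) (hcp : c ≤ p r)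
    (hcρ : c ≤ ρ r) (hξ0 : ξ 0 = 0) :
    ξ r ^ 2 + r * (2 * ξ r * ξ' r) ≤ 1 / c * xkDensity k p Bθ ρ ξ ξ' η r := by
  rcases hr.eq_or_lt with rfl | hr
  · simp [hξ0, xkDensity, gradDensity, massDensity]
  have hn := mul_sq_add_mul_sq_le_xkDensity (k := k) (p := p) (Bθ := Bθ) (ξ := ξ) (ξ' := ξ')
    (η := η) hr.le (hc.le.trans hcρ)
  set V := (ξ r + r * ξ' r) / r with hV
  have hrV : r * V = ξ r + r * ξ' r := by rw [hV]; field_simp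
  have hξV : ξ r ^ 2 + r * (2 * ξ r * ξ' r) ≤ r * (V ^ 2 + ξ r ^ 2) := by
    have e : ξ r ^ 2 + r * (2 * ξ r * ξ' r) = 2 * ξ r * (r * V) - ξ r ^ 2 := by
      linear_combination (-2 * ξ r) * hrV
    nlinarith [mul_nonneg hr.le (sq_nonneg (ξ r - V)), sq_nonneg (ξ r)]
  have hcV : c * (r * (V ^ 2 + ξ r ^ 2)) ≤ p r * V ^ 2 * r + ρ r * ξ r ^ 2 * r := by
    nlinarith [mul_nonneg hr.le (sq_nonneg V), mul_nonneg hr.le (sq_nonneg (ξ r))]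
  rw [one_div_mul_eq_div, le_div_iff₀ hc]
  nlinarith

theorem abs_mul_deriv_sq_le_xkDensity (ha : 0 < a) (har : a ≤ r) (hp : 0 ≤ p r)
    (hρ : 0 ≤ ρ r) (hpK : p r ≤ K * ρ r) (hK : 0 ≤ K) :
    |p r * (2 * ξ r * ξ' r)| ≤ (1 + K) * (1 + 2 / a) / a * xkDensity k p Bθ ρ ξ ξ' η r := by
  have hr : 0 < r := ha.trans_le har
  have hn := mul_sq_add_mul_sq_le_xkDensity (k := k) (p := p) (Bθ := Bθ) (ξ := ξ) (ξ' := ξ')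
    (η := η) hr.le hρ
  set V := (ξ r + r * ξ' r) / r with hV
  set L := (1 + K) * (1 + 2 / a) / a
  have hξ' : 2 * ξ r * ξ' r = 2 * ξ r * V - 2 * ξ r ^ 2 / r := by rw [hV]; field_simp; ring
  have hξV : |2 * ξ r * ξ' r| ≤ V ^ 2 + (1 + 2 / a) * ξ r ^ 2 := by
    have h1 : |2 * ξ r * V| ≤ ξ r ^ 2 + V ^ 2 := by
      rw [abs_le]; constructor <;> nlinarith [sq_nonneg (ξ r + V), sq_nonneg (ξ r - V)]
    have h2 : 2 * ξ r ^ 2 / r ≤ 2 / a * ξ r ^ 2 := by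
      rw [div_mul_eq_mul_div, mul_comm 2]; gcongr
    rw [hξ']
    refine (abs_sub _ _).trans ?_
    rw [abs_of_nonneg (by positivity : 0 ≤ 2 * ξ r ^ 2 / r)]
    linarith
  have hLr : 1 ≤ L * r ∧ (1 + 2 / a) * K ≤ L * r := by
    have hR : 1 ≤ r / a := (one_le_div ha).2 har
    have hLr : (1 + K) * (1 + 2 / a) ≤ L * r := by
      rw [show L * r = (1 + K) * (1 + 2 / a) * (r / a) by ring]
      exact le_mul_of_one_le_right (by positivity) hR
    have : 1 ≤ 1 + 2 / a := le_add_of_nonneg_right (by positivity)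
    constructor <;> nlinarith
  calc |p r * (2 * ξ r * ξ' r)| ≤ p r * (V ^ 2 + (1 + 2 / a) * ξ r ^ 2) := by
        rw [abs_mul, abs_of_nonneg hp]; gcongr
    _ ≤ (L * r) * (p r * V ^ 2) + (L * r) * (ρ r * ξ r ^ 2) := by
        nlinarith [mul_le_mul_of_nonneg_right hLr.1 (by positivity : 0 ≤ p r * V ^ 2),
          mul_le_mul_of_nonneg_right hLr.2 (by positivity : 0 ≤ ρ r * ξ r ^ 2),
          mul_le_mul_of_nonneg_left hpK (by positivity : 0 ≤ (1 + 2 / a) * ξ r ^ 2)]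
    _ = L * (p r * V ^ 2 * r + ρ r * ξ r ^ 2 * r) := by ring
    _ ≤ L * xkDensity k p Bθ ρ ξ ξ' η r := by gcongr

theorem intervalIntegrable_gradDensity (hr₀ : 0 ≤ r₀) (hp : ContinuousOn p (Icc 0 r₀))
    (hB : ContinuousOn Bθ (Icc 0 r₀))
    (hξ : ∀ r ∈ Icc 0 r₀, HasDerivWithinAt ξ (ξ' r) (Icc 0 r₀) r)
    (hξ' : ContinuousOn ξ' (Icc 0 r₀)) (hη : ContinuousOn η (Icc 0 r₀)) (hξ0 : ξ 0 = 0) :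
    IntervalIntegrable (gradDensity k p Bθ ξ ξ' η) volume 0 r₀ :=
  intervalIntegrable_of_eq_div hr₀ hξ hξ0
    (F := fun r t => (p r * (t + ξ' r) ^ 2 + Bθ r ^ 2 * (k * η r - (ξ' r - t)) ^ 2) * r)
    (fun r hr => by simp only [gradDensity, add_div, sub_div, mul_div_cancel_left₀ _ hr])
    (fun q hq => by fun_prop)

theorem intervalIntegrable_stabilizingDensity (hr₀ : 0 ≤ r₀) (hp : ContinuousOn p (Icc 0 r₀))
    (hB : ContinuousOn Bθ (Icc 0 r₀))
    (hξ : ∀ r ∈ Icc 0 r₀, HasDerivWithinAt ξ (ξ' r) (Icc 0 r₀) r)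
    (hξ' : ContinuousOn ξ' (Icc 0 r₀)) (hη : ContinuousOn η (Icc 0 r₀)) (hξ0 : ξ 0 = 0) :
    IntervalIntegrable (stabilizingDensity γ k p Bθ ξ ξ' η) volume 0 r₀ :=
  intervalIntegrable_of_eq_div hr₀ hξ hξ0
    (F := fun r t => (Bθ r ^ 2 * (k * η r - (ξ' r - t)) ^ 2
      + γ * p r * (t + ξ' r - k * η r) ^ 2) * r)
    (fun r hr => by simp only [stabilizingDensity, add_div, sub_div, mul_div_cancel_left₀ _ hr])
    (fun q hq => by fun_prop)

theorem integral_stabilizingDensity_le (hr₀ : 0 ≤ r₀) (hp0 : ∀ r ∈ Icc 0 r₀, 0 ≤ p r)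
    (hρ0 : ∀ r ∈ Icc 0 r₀, 0 ≤ ρ r) (hpK : ∀ r ∈ Icc 0 r₀, p r ≤ K * ρ r) (hK : 0 ≤ K)
    (hγ : 0 ≤ γ) (hs : IntervalIntegrable (stabilizingDensity γ k p Bθ ξ ξ' η) volume 0 r₀)
    (hn : IntervalIntegrable (xkDensity k p Bθ ρ ξ ξ' η) volume 0 r₀) :
    ∫ r in (0:ℝ)..r₀, stabilizingDensity γ k p Bθ ξ ξ' η r
      ≤ (1 + 2 * γ * (1 + k ^ 2 * K)) * ∫ r in (0:ℝ)..r₀, xkDensity k p Bθ ρ ξ ξ' η r :=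
  integral_le_mul_integral_of_le_mul le_rfl hr₀ le_rfl hs hn
    (fun r hr => xkDensity_nonneg hr.1 (hp0 r hr) (hρ0 r hr)) (by positivity)
    fun r hr => stabilizingDensity_le hr.1 (hp0 r hr) (hρ0 r hr) (hpK r hr) hK hγ

theorem mul_sq_le_integral_xkDensity (ha : 0 < a) (har : a ≤ r₀) (hc : 0 < c)
    (hcpρ : ∀ r ∈ Icc 0 a, c ≤ p r ∧ c ≤ ρ r)
    (hξ : ∀ r ∈ Icc 0 r₀, HasDerivWithinAt ξ (ξ' r) (Icc 0 r₀) r)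
    (hξ' : ContinuousOn ξ' (Icc 0 r₀)) (hξ0 : ξ 0 = 0)
    (hn : IntervalIntegrable (xkDensity k p Bθ ρ ξ ξ' η) volume 0 r₀)
    (hn0 : ∀ r ∈ Icc 0 r₀, 0 ≤ xkDensity k p Bθ ρ ξ ξ' η r) :
    a * ξ a ^ 2 ≤ 1 / c * ∫ r in (0:ℝ)..r₀, xkDensity k p Bθ ρ ξ ξ' η r := by
  have hsub : Icc 0 a ⊆ Icc 0 r₀ := Icc_subset_Icc le_rfl har
  have h := integral_deriv_mul_sq_eq ha.le (fun r _ => hasDerivWithinAt_id r (Icc 0 a))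
    continuousOn_const (fun r hr => (hξ r (hsub hr)).mono hsub) (hξ'.mono hsub)
  simp only [id, one_mul, zero_mul, sub_zero] at h
  rw [← h]
  have : ContinuousOn ξ (Icc 0 a) := fun r hr => (hξ r (hsub hr)).continuousWithinAt.mono hsub
  have := hξ'.mono hsub
  exact integral_le_mul_integral_of_le_mul le_rfl ha.le har
    (ContinuousOn.intervalIntegrable_of_Icc ha.le (by fun_prop)) hn hn0 (by positivity)
    fun r hr => sq_add_mul_deriv_sq_le_xkDensity hr.1 hc (hcpρ r hr).1 (hcpρ r hr).2 hξ0

theorem abs_integral_deriv_mul_sq_le_add (ha : 0 < a) (har : a ≤ r₀)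
    (hp : ∀ r ∈ Icc 0 r₀, HasDerivWithinAt p (p' r) (Icc 0 r₀) r)
    (hp' : ContinuousOn p' (Icc 0 r₀)) (hp0 : ∀ r ∈ Icc 0 r₀, 0 ≤ p r)
    (hρ0 : ∀ r ∈ Icc 0 r₀, 0 ≤ ρ r) (hpr₀ : p r₀ = 0) (hK : 0 ≤ K)
    (hpK : ∀ r ∈ Icc 0 r₀, p r ≤ K * ρ r)
    (hξ : ∀ r ∈ Icc 0 r₀, HasDerivWithinAt ξ (ξ' r) (Icc 0 r₀) r)
    (hξ' : ContinuousOn ξ' (Icc 0 r₀))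
    (hn : IntervalIntegrable (xkDensity k p Bθ ρ ξ ξ' η) volume 0 r₀)
    (hn0 : ∀ r ∈ Icc 0 r₀, 0 ≤ xkDensity k p Bθ ρ ξ ξ' η r) :
    |∫ r in a..r₀, p' r * ξ r ^ 2| ≤ p a * ξ a ^ 2
      + (1 + K) * (1 + 2 / a) / a * ∫ r in (0:ℝ)..r₀, xkDensity k p Bθ ρ ξ ξ' η r := by
  have hsub : Icc a r₀ ⊆ Icc 0 r₀ := Icc_subset_Icc ha.le le_rfl
  have hp₁ := fun r hr => (hp r (hsub hr)).mono hsub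
  have hξ₁ := fun r hr => (hξ r (hsub hr)).mono hsub
  have : ContinuousOn p (Icc a r₀) := fun r hr => (hp₁ r hr).continuousWithinAt
  have : ContinuousOn ξ (Icc a r₀) := fun r hr => (hξ₁ r hr).continuousWithinAt
  have := hp'.mono hsub
  have := hξ'.mono hsub
  have hP : IntervalIntegrable (fun r => p' r * ξ r ^ 2) volume a r₀ :=
    ContinuousOn.intervalIntegrable_of_Icc har (by fun_prop)
  have hQ : IntervalIntegrable (fun r => p r * (2 * ξ r * ξ' r)) volume a r₀ :=
    ContinuousOn.intervalIntegrable_of_Icc har (by fun_prop)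
  have h_parts := integral_deriv_mul_sq_eq har hp₁ (hp'.mono hsub) hξ₁ (hξ'.mono hsub)
  rw [integral_add hP hQ, hpr₀, zero_mul, zero_sub] at h_parts
  rw [eq_sub_of_add_eq h_parts]
  refine (abs_sub _ _).trans ?_
  rw [abs_neg, abs_of_nonneg (mul_nonneg (hp0 a ⟨ha.le, har⟩) (sq_nonneg (ξ a)))]
  gcongr
  exact abs_integral_le_mul_integral_of_abs_le_mul ha.le har le_rfl hQ hn hn0 (by positivity)
    fun r hr => abs_mul_deriv_sq_le_xkDensity ha hr.1 (hp0 r (hsub hr)) (hρ0 r (hsub hr))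
      (hpK r (hsub hr)) hK

theorem abs_integral_deriv_mul_sq_le (ha : 0 < a) (har : a ≤ r₀)
    (hp : ∀ r ∈ Icc 0 r₀, HasDerivWithinAt p (p' r) (Icc 0 r₀) r)
    (hp' : ContinuousOn p' (Icc 0 r₀)) (hp0 : ∀ r ∈ Icc 0 r₀, 0 ≤ p r)
    (hρ0 : ∀ r ∈ Icc 0 r₀, 0 ≤ ρ r) (hpr₀ : p r₀ = 0) (hK : 0 ≤ K)
    (hpK : ∀ r ∈ Icc 0 r₀, p r ≤ K * ρ r) (hM : 0 ≤ M) (hp'M : ∀ r ∈ Icc 0 r₀, |p' r| ≤ M * r)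
    (hc : 0 < c) (hcpρ : ∀ r ∈ Icc 0 a, c ≤ p r ∧ c ≤ ρ r)
    (hξ : ∀ r ∈ Icc 0 r₀, HasDerivWithinAt ξ (ξ' r) (Icc 0 r₀) r)
    (hξ' : ContinuousOn ξ' (Icc 0 r₀)) (hξ0 : ξ 0 = 0)
    (hn : IntervalIntegrable (xkDensity k p Bθ ρ ξ ξ' η) volume 0 r₀) :
    |∫ r in (0:ℝ)..r₀, p' r * ξ r ^ 2|
      ≤ (M / c + p a / (a * c) + (1 + K) * (1 + 2 / a) / a)
        * ∫ r in (0:ℝ)..r₀, xkDensity k p Bθ ρ ξ ξ' η r := by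
  set N := ∫ r in (0:ℝ)..r₀, xkDensity k p Bθ ρ ξ ξ' η r
  have hsub : Icc 0 a ⊆ Icc 0 r₀ := Icc_subset_Icc le_rfl har
  have ha_mem : a ∈ uIcc 0 r₀ := mem_uIcc_of_le ha.le har
  have hn0 : ∀ r ∈ Icc 0 r₀, 0 ≤ xkDensity k p Bθ ρ ξ ξ' η r :=
    fun r hr => xkDensity_nonneg hr.1 (hp0 r hr) (hρ0 r hr)
  have hξc : ContinuousOn ξ (Icc 0 r₀) := fun r hr => (hξ r hr).continuousWithinAt
  have hP : IntervalIntegrable (fun r => p' r * ξ r ^ 2) volume 0 r₀ :=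
    ContinuousOn.intervalIntegrable_of_Icc (ha.le.trans har) (by fun_prop)
  have h_axis : |∫ r in (0:ℝ)..a, p' r * ξ r ^ 2| ≤ M / c * N :=
    abs_integral_le_mul_integral_of_abs_le_mul le_rfl ha.le har
      (hP.mono_set (uIcc_subset_uIcc_left ha_mem)) hn hn0 (by positivity) fun r hr =>
        abs_deriv_mul_sq_le_xkDensity hr.1 (hp0 r (hsub hr)) hc (hcpρ r hr).2 hM
          (hp'M r (hsub hr))
  have h_away := abs_integral_deriv_mul_sq_le_add ha har hp hp' hp0 hρ0 hpr₀ hK hpK hξ hξ' hn hn0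
  have h_boundary := mul_sq_le_integral_xkDensity ha har hc hcpρ hξ hξ' hξ0 hn hn0
  have hpa : p a * ξ a ^ 2 ≤ p a / (a * c) * N := by
    have := hp0 a ⟨ha.le, har⟩
    calc p a * ξ a ^ 2 = p a / a * (a * ξ a ^ 2) := by field_simp
      _ ≤ p a / a * (1 / c * N) := by gcongr
      _ = p a / (a * c) * N := by field_simp
  rw [← integral_add_adjacent_intervals (hP.mono_set (uIcc_subset_uIcc_left ha_mem))
    (hP.mono_set (uIcc_subset_uIcc_right ha_mem))]
  linarith [abs_add_le (∫ r in (0:ℝ)..a, p' r * ξ r ^ 2) (∫ r in a..r₀, p' r * ξ r ^ 2)]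

end Densities

theorem exists_abs_integral_energyDensity_le {r₀ γ k K M : ℝ} {p p' Bθ ρ : ℝ → ℝ} (hr₀ : 0 < r₀)
    (hγ : 0 ≤ γ) (hp : ∀ r ∈ Icc 0 r₀, HasDerivWithinAt p (p' r) (Icc 0 r₀) r)
    (hp' : ContinuousOn p' (Icc 0 r₀)) (hB : ContinuousOn Bθ (Icc 0 r₀))
    (hρ : ContinuousOn ρ (Icc 0 r₀)) (hpos : ∀ r ∈ Ico 0 r₀, 0 < p r ∧ 0 < ρ r)
    (hρ0 : ∀ r ∈ Icc 0 r₀, 0 ≤ ρ r) (hpr₀ : p r₀ = 0) (hK : 0 ≤ K)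
    (hpK : ∀ r ∈ Icc 0 r₀, p r ≤ K * ρ r) (hM : 0 ≤ M) (hp'M : ∀ r ∈ Icc 0 r₀, |p' r| ≤ M * r) :
    ∃ C > 0, ∀ ξ η ξ' : ℝ → ℝ, (∀ r ∈ Icc 0 r₀, HasDerivWithinAt ξ (ξ' r) (Icc 0 r₀) r) →
      ContinuousOn ξ' (Icc 0 r₀) → ContinuousOn η (Icc 0 r₀) → ξ 0 = 0 →
      |∫ r in (0:ℝ)..r₀, energyDensity γ k p p' Bθ ξ ξ' η r| ≤
        C * ((∫ r in (0:ℝ)..r₀, gradDensity k p Bθ ξ ξ' η r)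
          + ∫ r in (0:ℝ)..r₀, massDensity ρ ξ η r) := by
  have hp0 := nonneg_of_pos_on_Ico_of_eq_zero (fun r hr => (hpos r hr).1) hpr₀
  have hpc : ContinuousOn p (Icc 0 r₀) := fun r hr => (hp r hr).continuousWithinAt
  set a := r₀ / 2
  have ha : 0 < a := half_pos hr₀
  have har : a < r₀ := half_lt_self hr₀
  obtain ⟨c, hc, hcpρ⟩ := isCompact_Icc.exists_forall_le' (f := fun r => p r ⊓ ρ r)
    ((hpc.inf hρ).mono (Icc_subset_Icc le_rfl har.le))
    fun r hr => lt_inf_iff.2 (hpos r ⟨hr.1, hr.2.trans_lt har⟩)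
  have hpa0 : 0 ≤ p a := hp0 a ⟨ha.le, har.le⟩
  refine ⟨2 * (M / c + p a / (a * c) + (1 + K) * (1 + 2 / a) / a)
    + (1 + 2 * γ * (1 + k ^ 2 * K)), by positivity, fun ξ η ξ' hξ hξ' hη hξ0 => ?_⟩
  have hξc : ContinuousOn ξ (Icc 0 r₀) := fun r hr => (hξ r hr).continuousWithinAt
  have hgrad := intervalIntegrable_gradDensity (k := k) hr₀.le hpc hB hξ hξ' hη hξ0
  have hmass : IntervalIntegrable (massDensity ρ ξ η) volume 0 r₀ :=
    ContinuousOn.intervalIntegrable_of_Icc hr₀.le (by unfold massDensity; fun_prop)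
  have hstab := intervalIntegrable_stabilizingDensity (γ := γ) (k := k) hr₀.le hpc hB hξ hξ' hη hξ0
  have hn : IntervalIntegrable (xkDensity k p Bθ ρ ξ ξ' η) volume 0 r₀ := hgrad.add hmass
  have h_destab := abs_integral_deriv_mul_sq_le ha har.le hp hp' hp0 hρ0 hpr₀ hK hpK hM hp'M hc
    (fun r hr => le_inf_iff.1 (hcpρ r hr)) hξ hξ' hξ0 hn
  have h_stab := integral_stabilizingDensity_le hr₀.le hp0 hρ0 hpK hK hγ hstab hn
  have h_stab0 : 0 ≤ ∫ r in (0:ℝ)..r₀, stabilizingDensity γ k p Bθ ξ ξ' η r :=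
    integral_nonneg hr₀.le fun r hr => stabilizingDensity_nonneg hr.1 (hp0 r hr) hγ
  have hP : IntervalIntegrable (fun r => p' r * ξ r ^ 2) volume 0 r₀ :=
    ContinuousOn.intervalIntegrable_of_Icc hr₀.le (by fun_prop)
  rw [← integral_add hgrad hmass, integral_congr fun r _ => energyDensity_eq hξ0 r,
    integral_add (hP.const_mul 2) hstab, intervalIntegral.integral_const_mul]
  refine (abs_add_le _ _).trans ?_
  rw [abs_mul, abs_two, abs_of_nonneg h_stab0]
  change _ ≤ _ * ∫ r in (0:ℝ)..r₀, xkDensity k p Bθ ρ ξ ξ' η r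
  linarith

theorem zpinch_sausage_energy_well_defined_general
    (r₀ γ A k : ℝ) (hr₀ : 0 < r₀) (hγ : 1 < γ) (hA : 0 < A)
    (Jz Bθ p p' ρ : ℝ → ℝ)
    (hJc : ContinuousOn Jz (Icc (0:ℝ) r₀))
    (hBθ0 : Bθ 0 = 0)
    (hBθ : ∀ r ∈ Ioc (0:ℝ) r₀, Bθ r = (1 / r) * ∫ s in (0:ℝ)..r, s * Jz s)
    (hp'def : ∀ r ∈ Icc (0:ℝ) r₀, p' r = -(Bθ r * Jz r))
    (hp : ∀ r ∈ Icc (0:ℝ) r₀, HasDerivWithinAt p (p' r) (Icc (0:ℝ) r₀) r)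
    -- admissibility of `p`
    (hppos : ∀ r ∈ Ico (0:ℝ) r₀, 0 < p r)
    (hpr₀ : p r₀ = 0)
    (hρ : ∀ r ∈ Icc (0:ℝ) r₀, ρ r = (p r / A) ^ (1 / γ)) :
    ∃ C > 0, ∀ ξ η ξ' η' : ℝ → ℝ,
      (∀ r ∈ Icc (0:ℝ) r₀, HasDerivWithinAt ξ (ξ' r) (Icc (0:ℝ) r₀) r) →
      ContinuousOn ξ' (Icc (0:ℝ) r₀) →
      (∀ r ∈ Icc (0:ℝ) r₀, HasDerivWithinAt η (η' r) (Icc (0:ℝ) r₀) r) →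
      ContinuousOn η' (Icc (0:ℝ) r₀) →
      ξ 0 = 0 →
      |2 * Real.pi ^ 2 * ∫ r in (0:ℝ)..r₀,
          (2 * p' r * (ξ r) ^ 2 / r
            + (Bθ r) ^ 2 * (k * η r - (r * ξ' r - ξ r) / r) ^ 2
            + γ * p r * ((ξ r + r * ξ' r) / r - k * η r) ^ 2) * r| ≤
        C * ((∫ r in (0:ℝ)..r₀,
            (p r * ((ξ r + r * ξ' r) / r) ^ 2
              + (Bθ r) ^ 2 * (k * η r - (r * ξ' r - ξ r) / r) ^ 2) * r)
          + (∫ r in (0:ℝ)..r₀, ρ r * ((ξ r) ^ 2 + (η r) ^ 2) * r)) := by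
  have hpc : ContinuousOn p (Icc 0 r₀) := fun r hr => (hp r hr).continuousWithinAt
  have hp0 := nonneg_of_pos_on_Ico_of_eq_zero hppos hpr₀
  have hρc : ContinuousOn ρ (Icc 0 r₀) :=
    ((hpc.div_const A).rpow_const fun _ _ => Or.inr (by positivity)).congr hρ
  have hpos : ∀ r ∈ Ico 0 r₀, 0 < p r ∧ 0 < ρ r := fun r hr => ⟨hppos r hr,
    (hρ r (Ico_subset_Icc_self hr)).symm ▸ Real.rpow_pos_of_pos (div_pos (hppos r hr) hA) _⟩
  have hρ0 : ∀ r ∈ Icc 0 r₀, 0 ≤ ρ r := fun r hr =>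
    (hρ r hr).symm ▸ Real.rpow_nonneg (div_nonneg (hp0 r hr) hA.le) _
  obtain ⟨MJ, hMJ⟩ := isCompact_Icc.exists_bound_of_continuousOn hJc
  have hJ : ∀ r ∈ Icc 0 r₀, |Jz r| ≤ MJ := fun r hr => by simpa using hMJ r hr
  have hBle := abs_le_of_eq_one_div_mul_integral hBθ0 hBθ hJ
  have hp'M : ∀ r ∈ Icc 0 r₀, |p' r| ≤ MJ ^ 2 / 2 * r := fun r hr => by
    rw [hp'def r hr, abs_neg, abs_mul]
    calc |Bθ r| * |Jz r| ≤ MJ / 2 * r * MJ :=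
          mul_le_mul (hBle r hr) (hJ r hr) (abs_nonneg _) ((abs_nonneg _).trans (hBle r hr))
      _ = MJ ^ 2 / 2 * r := by ring
  have hBc := continuousOn_of_eq_one_div_mul_integral hJc hBθ0 hBθ
  obtain ⟨K, hK, hpK⟩ := exists_le_mul_rpow isCompact_Icc hpc hp0 hA hγ.le
  obtain ⟨C, hC, hE⟩ := exists_abs_integral_energyDensity_le (γ := γ) (k := k) hr₀ (by linarith)
    hp ((hBc.mul hJc).neg.congr hp'def) hBc hρc hpos hρ0 hpr₀ hK
    (fun r hr => hρ r hr ▸ hpK r hr) (by positivity) hp'M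
  refine ⟨2 * Real.pi ^ 2 * C, by positivity, fun ξ η ξ' η' hξ hξ' hη _ hξ0 => ?_⟩
  rw [abs_mul, abs_of_nonneg (by positivity : (0:ℝ) ≤ 2 * Real.pi ^ 2), mul_assoc _ C]
  exact mul_le_mul_of_nonneg_left
    (hE ξ η ξ' hξ hξ' (fun r hr => (hη r hr).continuousWithinAt) hξ0) (by positivity)

/-- Lemma 3.8, well-definedness of `E_{0,k}` on `X_k`. For an admissible
z-pinch equilibrium there is `C > 0` such that `|E_{0,k}(ξ,η)| ≤ C ‖(ξ,η)‖²_{X_k}` for every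
`C¹` pair `(ξ,η)` with `ξ(0) = 0`. -/
theorem zpinch_sausage_energy_well_defined
    (r₀ γ A k : ℝ) (hr₀ : 0 < r₀) (hγ : 1 < γ) (hA : 0 < A)
    (Jz Bθ p p' ρ : ℝ → ℝ)
    (hJc : ContinuousOn Jz (Icc (0:ℝ) r₀))
    (hBθ0 : Bθ 0 = 0)
    (hBθ : ∀ r ∈ Ioc (0:ℝ) r₀, Bθ r = (1 / r) * ∫ s in (0:ℝ)..r, s * Jz s)
    (hp'def : ∀ r ∈ Icc (0:ℝ) r₀, p' r = -(Bθ r * Jz r))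
    (hp : ∀ r ∈ Icc (0:ℝ) r₀, HasDerivWithinAt p (p' r) (Icc (0:ℝ) r₀) r)
    -- admissibility of `p`
    (hppos : ∀ r ∈ Ico (0:ℝ) r₀, 0 < p r)
    (hpr₀ : p r₀ = 0)
    (ε : ℝ) (hε : 0 < ε)
    (hp'neg : ∀ r ∈ Ico (r₀ - ε) r₀, p' r < 0)
    (hlim : Filter.Tendsto (fun r => p r / p' r) (nhdsWithin r₀ (Iio r₀)) (nhds 0))
    (hρ : ∀ r ∈ Icc (0:ℝ) r₀, ρ r = (p r / A) ^ (1 / γ)) :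
    ∃ C > 0, ∀ ξ η ξ' η' : ℝ → ℝ,
      (∀ r ∈ Icc (0:ℝ) r₀, HasDerivWithinAt ξ (ξ' r) (Icc (0:ℝ) r₀) r) →
      ContinuousOn ξ' (Icc (0:ℝ) r₀) →
      (∀ r ∈ Icc (0:ℝ) r₀, HasDerivWithinAt η (η' r) (Icc (0:ℝ) r₀) r) →
      ContinuousOn η' (Icc (0:ℝ) r₀) →
      ξ 0 = 0 →
      |2 * Real.pi ^ 2 * ∫ r in (0:ℝ)..r₀,
          (2 * p' r * (ξ r) ^ 2 / r
            + (Bθ r) ^ 2 * (k * η r - (r * ξ' r - ξ r) / r) ^ 2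
            + γ * p r * ((ξ r + r * ξ' r) / r - k * η r) ^ 2) * r| ≤
        C * ((∫ r in (0:ℝ)..r₀,
            (p r * ((ξ r + r * ξ' r) / r) ^ 2
              + (Bθ r) ^ 2 * (k * η r - (r * ξ' r - ξ r) / r) ^ 2) * r)
          + (∫ r in (0:ℝ)..r₀, ρ r * ((ξ r) ^ 2 + (η r) ^ 2) * r)) :=
  zpinch_sausage_energy_well_defined_general r₀ γ A k hr₀ hγ hA Jz Bθ p p' ρ hJc hBθ0 hBθ hp'def hp
    hppos hpr₀ hρ
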